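/- arXiv:2604.06031 — 3 statements merged into one kernel-verified Lean document; each statement's English description precedes it below -/
import Mathlib

section
/- (Ditor) Let n be a positive integer and let κ be an infinite cardinal. If P is a join-semilattice of breadth at most n in which every principal ideal {y ∈ P : y ≤ x} has cardinality strictly less than κ, then every proper ideal I of P has cardinality strictly less than κ^{+(n-1)}, the (n-1)-st successor cardinal of κ. -/
/-- `P` has breadth at most `n`: every nonempty finite subset `X` of `P` has a
subset `Y` with at most `n` elements and the same supremum. -/
def HasBreadthAtMost (P : Type*) [SemilatticeSup P] (n : ℕ) : Prop :=
  ∀ (X : Finset P) (hX : X.Nonempty),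
    ∃ (Y : Finset P) (hY : Y.Nonempty), Y ⊆ X ∧ Y.card ≤ n ∧ X.sup' hX id = Y.sup' hY id

/-!
Induction on the breadth. In breadth `1` the semilattice is a chain, so a proper ideal lies
below any element outside it. In breadth `m + 2`, pick `x ∉ I`. The join-translate `x ⊔ I` is a
subsemilattice of breadth `m + 1`: a small subset witnessing a join `x ⊔ ⋁ yᵢ` (`yᵢ ∈ I`) must
contain `x`, as `x` lies below no element of `I`. By induction its proper ideals have size
`< κ^{+m}`, so it has size at most `κ^{+m}` itself, since otherwise the ideal generated by
`κ^{+m}` of its elements would be proper. Finally `I` is covered by the principal ideals of the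
elements of `x ⊔ I`, so `|I| ≤ κ^{+m} · κ < κ^{+(m+1)}`.
-/

universe u

open Cardinal Set

section SemilatticeSup

variable {P : Type*} [SemilatticeSup P] {n : ℕ}

theorem HasBreadthAtMost.le_total (h : HasBreadthAtMost P 1) (a b : P) : a ≤ b ∨ b ≤ a := by
  classical
  obtain ⟨Y, hY, hYab, hYcard, hsup⟩ := h {a, b} (Finset.insert_nonempty a _)
  obtain ⟨c, rfl⟩ := Finset.card_eq_one.1 (le_antisymm hYcard hY.card_pos)
  rw [Finset.sup'_insert (H := Finset.singleton_nonempty b), Finset.sup'_singleton,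
    Finset.sup'_singleton] at hsup
  rcases Finset.mem_insert.1 (hYab (Finset.mem_singleton_self c)) with rfl | hc
  · exact .inr (sup_eq_left.1 hsup)
  · rw [Finset.mem_singleton.1 hc] at hsup
    exact .inl (sup_eq_right.1 hsup)

theorem HasBreadthAtMost.exists_sup_sup'_eq (h : HasBreadthAtMost P (n + 1)) (hn : n ≠ 0)
    {ι : Type*} {x : P} {s : Finset ι} (hs : s.Nonempty) (y : ι → P) (hx : ¬ x ≤ s.sup' hs y) :
    ∃ t ⊆ s, ∃ ht : t.Nonempty, t.card ≤ n ∧ x ⊔ s.sup' hs y = x ⊔ t.sup' ht y := by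
  classical
  obtain ⟨Y, hY, hYs, hYcard, hsup⟩ := h (insert x (s.image y)) (Finset.insert_nonempty _ _)
  rw [Finset.sup'_insert (H := hs.image y), Finset.sup'_image, id, Function.id_comp] at hsup
  have hxY : x ∈ Y := by
    by_contra hxY
    refine hx (le_sup_left.trans (hsup.trans_le (Finset.sup'_le _ _ fun b hb => ?_)))
    obtain ⟨i, hi, rfl⟩ := Finset.mem_image.1 ((Finset.subset_insert_iff_of_notMem hxY).1 hYs hb)
    exact Finset.le_sup' y hi
  have hYx : Y.erase x ⊆ s.image y :=
    (Finset.erase_subset_erase x hYs).trans (Finset.erase_insert_subset x _)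
  rcases (Y.erase x).eq_empty_or_nonempty with hY' | hY'
  · have hle : s.sup' hs y ≤ x := by
      obtain rfl : Y = {x} := ((Finset.erase_eq_empty_iff Y x).1 hY').resolve_left hY.ne_empty
      rw [← sup_eq_left, hsup, Finset.sup'_singleton, id]
    obtain ⟨i, hi⟩ := hs
    refine ⟨{i}, Finset.singleton_subset_iff.2 hi, Finset.singleton_nonempty i,
      by simpa using Nat.one_le_iff_ne_zero.2 hn, ?_⟩
    rw [Finset.sup'_singleton, sup_eq_left.2 hle, sup_eq_left.2 ((Finset.le_sup' y hi).trans hle)]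
  · obtain ⟨t, hts, hinj, hty⟩ := Finset.exists_subset_injOn_image_eq_of_surjOn (s : Set ι)
      (Y.erase x) (Finset.surjOn_iff_subset_image.2 hYx)
    have ht : t.Nonempty := Finset.image_nonempty.1 (hty ▸ hY')
    refine ⟨t, Finset.coe_subset.1 hts, ht, ?_, ?_⟩
    · have := Finset.card_erase_of_mem hxY
      rw [← hty, Finset.card_image_of_injOn hinj] at this
      omega
    · rw [hsup, ← Finset.sup'_congr (Finset.insert_nonempty _ _) (Finset.insert_erase hxY)
        fun _ _ => rfl, Finset.sup'_insert (H := hY')]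
      simp only [← hty, Finset.sup'_image]
      rfl

abbrev SupClosed.semilatticeSup {s : Set P} (hs : SupClosed s) : SemilatticeSup s :=
  Subtype.semilatticeSup fun _ _ ha hb => hs ha hb

theorem SupClosed.image_sup_left {s : Set P} (hs : SupClosed s) (x : P) :
    SupClosed ((x ⊔ ·) '' s) := by
  rintro _ ⟨a, ha, rfl⟩ _ ⟨b, hb, rfl⟩
  exact ⟨a ⊔ b, hs ha hb, sup_sup_distrib_left x a b⟩

theorem HasBreadthAtMost.image_sup_left (h : HasBreadthAtMost P (n + 1)) (hn : n ≠ 0)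
    {s : Set P} (hs : SupClosed s) {x : P} (hx : ∀ a ∈ s, ¬ x ≤ a) :
    letI := (hs.image_sup_left x).semilatticeSup
    HasBreadthAtMost ((x ⊔ ·) '' s) n := by
  let := (hs.image_sup_left x).semilatticeSup
  intro X hX
  choose y hys hy using fun q : (x ⊔ ·) '' s => q.2
  have hsup : ∀ (Z : Finset ((x ⊔ ·) '' s)) (hZ : Z.Nonempty),
      ((Z.sup' hZ id : (x ⊔ ·) '' s) : P) = x ⊔ Z.sup' hZ y := fun Z hZ => by
    rw [Finset.apply_sup'_eq_sup'_comp hZ Subtype.val fun _ _ => rfl,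
      Finset.apply_sup'_eq_sup'_comp hZ (x ⊔ ·) (sup_sup_distrib_left x)]
    exact Finset.sup'_congr hZ rfl fun q _ => (hy q).symm
  obtain ⟨t, htX, ht, htcard, hxt⟩ := h.exists_sup_sup'_eq hn hX y
    (hx _ (hs.finsetSup'_mem hX fun q _ => hys q))
  exact ⟨t, ht, htX, htcard, Subtype.ext (by rw [hsup, hsup, hxt])⟩

theorem Order.Ideal.supClosed (I : Order.Ideal P) : SupClosed (I : Set P) :=
  fun _ ha _ hb => I.sup_mem ha hb

theorem Order.Ideal.IsProper.exists_forall_not_le {I : Order.Ideal P} (hI : I.IsProper) :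
    ∃ x, ∀ a ∈ (I : Set P), ¬ x ≤ a := by
  obtain ⟨x, hx⟩ := (ne_univ_iff_exists_notMem _).1 hI.ne_univ
  exact ⟨x, fun a ha hxa => hx (I.lower hxa ha)⟩

theorem SupClosed.lowerClosure {s : Set P} (hs : SupClosed s) :
    SupClosed (_root_.lowerClosure s : Set P) := by
  rintro a ⟨c, hc, hac⟩ b ⟨d, hd, hbd⟩
  exact ⟨c ⊔ d, hs hc hd, sup_le_sup hac hbd⟩

theorem SupClosed.isIdeal_lowerClosure {s : Set P} (hs : SupClosed s) (hne : s.Nonempty) :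
    Order.IsIdeal (_root_.lowerClosure s : Set P) :=
  ⟨(_root_.lowerClosure s).lower, hne.mono subset_lowerClosure, hs.lowerClosure.directedOn⟩

end SemilatticeSup

section Cardinal

variable {P : Type u}

theorem Cardinal.mk_supClosure_le [SemilatticeSup P] (s : Set P) :
    #(supClosure s) ≤ #(Finset s) := by
  refine (mk_le_mk_of_subset fun a ha => ?_).trans
    (mk_range_le (f := fun t : {t : Finset s // t.Nonempty} => t.1.sup' t.2 Subtype.val)
      |>.trans (mk_subtype_le _))
  obtain ⟨u, hu, hus, rfl⟩ := ha
  classical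
  lift u to Finset s using hus
  exact ⟨⟨u, Finset.image_nonempty.1 hu⟩, by simp [Finset.sup'_image]⟩

theorem Cardinal.mk_Iic_subtype_le [Preorder P] {p : P → Prop} (a : Subtype p) :
    #(Iic a) ≤ #(Iic a.1) := by
  rw [← mk_image_eq Subtype.val_injective]
  exact mk_le_mk_of_subset (image_subtype_val_Iic_subset a)

theorem Cardinal.mk_lowerClosure_le [Preorder P] {κ : Cardinal.{u}} (hκ : ∀ a : P, #(Iic a) ≤ κ)
    (s : Set P) : #(lowerClosure s : Set P) ≤ #s * κ := by
  rw [coe_lowerClosure]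
  refine (mk_biUnion_le _ s).trans ?_
  gcongr
  exact ciSup_le' fun a => hκ a

theorem Cardinal.mk_le_of_forall_isProper_mk_lt [SemilatticeSup P] {μ : Cardinal.{u}}
    (hμ : ℵ₀ ≤ μ) (hprin : ∀ a : P, #(Iic a) ≤ μ)
    (hideal : ∀ I : Order.Ideal P, I.IsProper → #I < μ) : #P ≤ μ := by
  by_contra! hP
  obtain ⟨S, hS⟩ := le_mk_iff_exists_set.1 hP.le
  have : Infinite S := infinite_iff.2 (hS ▸ hμ)
  set J := (supClosed_supClosure (s := S)).isIdeal_lowerClosure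
    ((Set.infinite_coe_iff.1 this).nonempty.mono subset_supClosure) |>.toIdeal
  have hJ : #(J : Set P) ≤ μ := calc
    #(J : Set P) ≤ #(supClosure S) * μ := mk_lowerClosure_le hprin _
    _ ≤ μ * μ := by gcongr; exact (mk_supClosure_le S).trans (mk_finset_of_infinite S ▸ hS.le)
    _ = μ := mul_eq_self hμ
  have hJproper : J.IsProper := ⟨fun h => hP.not_ge (by rwa [h, mk_univ] at hJ)⟩
  have hSJ : S ⊆ J := subset_supClosure.trans subset_lowerClosure
  exact (hideal J hJproper).not_ge (hS ▸ mk_le_mk_of_subset hSJ)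

end Cardinal

theorem HasBreadthAtMost.mk_ideal_lt_succ_iterate {P : Type u} [SemilatticeSup P] {m : ℕ}
    {κ : Cardinal.{u}} (hκ : ℵ₀ ≤ κ) (hbr : HasBreadthAtMost P (m + 1))
    (hprin : ∀ a : P, #(Iic a) < κ) (I : Order.Ideal P) (hI : I.IsProper) :
    #I < Order.succ^[m] κ := by
  induction m generalizing P with
  | zero =>
    obtain ⟨x, hx⟩ := hI.exists_forall_not_le
    have hIx : (I : Set P) ⊆ Iic x := fun a ha => (hbr.le_total a x).resolve_right (hx a ha)
    exact (mk_le_mk_of_subset hIx).trans_lt (hprin x)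
  | succ m ih =>
    obtain ⟨x, hx⟩ := hI.exists_forall_not_le
    have hQsup := I.supClosed.image_sup_left x
    let := hQsup.semilatticeSup
    have hQprin (q : (x ⊔ ·) '' (I : Set P)) : #(Iic q) < κ :=
      (mk_Iic_subtype_le q).trans_lt (hprin q)
    have hμ := hκ.trans (Order.le_succ_iterate m κ)
    have hQcard : #((x ⊔ ·) '' (I : Set P)) ≤ Order.succ^[m] κ :=
      mk_le_of_forall_isProper_mk_lt hμ (fun q => (hQprin q).le.trans (Order.le_succ_iterate m κ))
        fun J hJ => ih (hbr.image_sup_left m.succ_ne_zero I.supClosed hx) hQprin J hJ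
    calc #(I : Set P)
        ≤ #(lowerClosure ((x ⊔ ·) '' (I : Set P)) : Set P) :=
          mk_le_mk_of_subset fun a ha => ⟨x ⊔ a, mem_image_of_mem _ ha, le_sup_right⟩
      _ ≤ #((x ⊔ ·) '' (I : Set P)) * κ := mk_lowerClosure_le (fun a => (hprin a).le) _
      _ ≤ Order.succ^[m] κ * Order.succ^[m] κ := by gcongr; exact Order.le_succ_iterate m κ
      _ = Order.succ^[m] κ := mul_eq_self hμ
      _ < Order.succ^[m + 1] κ := by
        rw [Function.iterate_succ_apply']
        exact Order.lt_succ _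

theorem ditor_proper_ideal_bound_general {P : Type u} [SemilatticeSup P]
    (n : ℕ) (hn : 0 < n) (κ : Cardinal.{u}) (hκ : Cardinal.aleph0 ≤ κ)
    (hbr : HasBreadthAtMost P n)
    (hprin : ∀ x : P, Cardinal.mk (Set.Iic x) < κ)
    (I : Order.Ideal P) (hI : I.IsProper) :
    Cardinal.mk I < Order.succ^[n - 1] κ := by
  obtain ⟨m, rfl⟩ := Nat.exists_eq_add_one_of_ne_zero hn.ne'
  simpa using hbr.mk_ideal_lt_succ_iterate hκ hprin I hI

/-- Ditor: if `P` is a join-semilattice of breadth at most `n > 0`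
whose principal ideals all have cardinality `< κ` (κ infinite), then every
proper ideal `I` of `P` has cardinality `< κ^{+(n-1)}`. -/
theorem ditor_proper_ideal_bound {P : Type u} [SemilatticeSup P] [Nonempty P]
    (n : ℕ) (hn : 0 < n) (κ : Cardinal.{u}) (hκ : Cardinal.aleph0 ≤ κ)
    (hbr : HasBreadthAtMost P n)
    (hprin : ∀ x : P, Cardinal.mk (Set.Iic x) < κ)
    (I : Order.Ideal P) (hI : I.IsProper) :
    Cardinal.mk I < Order.succ^[n - 1] κ :=
  ditor_proper_ideal_bound_general n hn κ hκ hbr hprin I hI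
end

section
/- (Ditor) For every positive integer n, every n-ladder of cardinality ℵ_{n-1} is maximal; that is, an n-ladder of cardinality ℵ_{n-1} is not order-isomorphic to a proper ideal of any n-ladder. -/
/-!
Suppose `P` is isomorphic to a proper ideal `I` of an `n`-ladder `Q`, and pick `c ∈ Q \ I`.
Since `Q` is lower finite, `t ↦ ↓(c ⊔ ⨆ t)` maps finite subsets of `I` to finite sets, so as
`#I = ℵ_(n-1)`, Kuratowski's free set theorem yields `x₁, …, xₙ ∈ I` with no `xᵢ` below
`zᵢ = c ⊔ ⨆_{j ≠ i} xⱼ`. Put `z = c ⊔ ⨆ xᵢ`. The `n + 1` elements `z₁, …, zₙ` and `⨆ xᵢ ∈ I`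
(which is not above `c`) lie strictly below `z` and any two of them join to `z`, so lower covers
of `z` above them are pairwise distinct: `z` has more than `n` lower covers.
-/

universe u

/-- `P` is an `n`-ladder: a nonempty lower finite lattice in which every element
has at most `n` lower covers. -/
def IsNLadder (P : Type*) [Lattice P] (n : ℕ) : Prop :=
  Nonempty P ∧ (∀ x : P, (Set.Iic x).Finite) ∧ ∀ x : P, {y : P | y ⋖ x}.ncard ≤ n

/-- `P` is a maximal `n`-ladder: an `n`-ladder which is not order-isomorphic to
a proper ideal of any `n`-ladder. -/
def IsMaximalNLadder (P : Type u) [Lattice P] (n : ℕ) : Prop :=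
  IsNLadder P n ∧
    ¬ ∃ (Q : Type u) (_ : Lattice Q) (I : Order.Ideal Q),
        IsNLadder Q n ∧ I.IsProper ∧ Nonempty (P ≃o ↥I)

open Cardinal Set Finset

section FreeSet

variable {α : Type u}

theorem mk_biUnion_finset_subset_le {F : Finset α → Set α} (hF : ∀ t, (F t).Finite) {B : Set α}
    (hB : ℵ₀ ≤ #B) :
    #(⋃ t ∈ {t : Finset α | ↑t ⊆ B}, F t) ≤ #B := by
  classical
  have hT : #{t : Finset α | ↑t ⊆ B} ≤ #B := by
    have : Infinite B := infinite_iff.2 hB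
    refine (mk_le_of_injective (f := fun t : {t : Finset α | ↑t ⊆ B} => t.1.subtype (· ∈ B))
      fun t t' h => Subtype.ext ?_).trans (mk_finset_of_infinite B).le
    rw [← subtype_map_of_mem t.2, ← subtype_map_of_mem t'.2]
    exact congrArg _ h
  calc #(⋃ t ∈ {t : Finset α | ↑t ⊆ B}, F t)
      ≤ #{t : Finset α | ↑t ⊆ B} * ⨆ t : {t : Finset α | ↑t ⊆ B}, #(F t.1) := mk_biUnion_le _ _
    _ ≤ #B * ℵ₀ := mul_le_mul' hT (ciSup_le' fun t => (hF t).lt_aleph0.le)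
    _ = #B := mul_eq_left hB hB aleph0_ne_zero

variable [DecidableEq α]

def IsFree (F : Finset α → Set α) (s : Finset α) : Prop :=
  ∀ a ∈ s, a ∉ F (s.erase a)

/-- Kuratowski's free set theorem. -/
theorem exists_isFree_of_aleph_le {F : Finset α → Set α} (hF : ∀ t, (F t).Finite) (n : ℕ)
    {A : Set α} (hA : ℵ_ n ≤ #A) : ∃ s : Finset α, ↑s ⊆ A ∧ s.card = n + 1 ∧ IsFree F s := by
  induction n generalizing F A with
  | zero =>
    have hAinf : A.Infinite := infinite_coe_iff.1 (infinite_iff.2 (by simpa using hA))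
    obtain ⟨b, hbA, hb⟩ := (hAinf.sdiff (hF ∅)).nonempty
    exact ⟨{b}, by simpa using hbA, rfl, by simpa [IsFree] using hb⟩
  | succ n ih =>
    -- `b ∈ A` avoids a subset `B` of size `ℵ_n` and every `F t` with `t ⊆ B`, so a free set
    -- in `B` for `t ↦ F (insert b t)` stays free after adding `b`.
    obtain ⟨B, hBA, hB⟩ := le_mk_iff_exists_subset.1 ((aleph_le_aleph.2 (by simp)).trans hA :
      ℵ_ n ≤ #A)
    set U := B ∪ ⋃ t ∈ {t : Finset α | ↑t ⊆ B}, F t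
    obtain ⟨b, hbA, hbU⟩ : (A \ U).Nonempty := by
      refine sdiff_nonempty.2 fun hAU => (mk_le_mk_of_subset hAU).not_gt ?_
      have hB0 : ℵ₀ ≤ #B := hB ▸ aleph0_le_aleph _
      calc #U ≤ #B + #B :=
            (mk_union_le _ _).trans (add_le_add le_rfl (mk_biUnion_finset_subset_le hF hB0))
        _ = ℵ_ n := by rw [add_eq_self hB0, hB]
        _ < ℵ_ (n + 1 : ℕ) := aleph_lt_aleph.2 (by simp)
        _ ≤ #A := hA
    obtain ⟨s, hsB, hcard, hfree⟩ := ih (F := fun t => F (insert b t)) (fun t => hF _) hB.ge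
    have hbs : b ∉ s := fun h => hbU (Or.inl (hsB h))
    refine ⟨insert b s, ?_, by rw [card_insert_of_notMem hbs, hcard], ?_⟩
    · simpa [Set.insert_subset_iff] using ⟨hbA, hsB.trans hBA⟩
    · intro a ha
      rcases mem_insert.1 ha with rfl | has
      · rw [erase_insert hbs]
        exact fun h => hbU (Or.inr (Set.mem_biUnion hsB h))
      · rw [erase_insert_of_ne (ne_of_mem_of_not_mem has hbs).symm]
        exact hfree a has

end FreeSet

section Lattice

variable {Q : Type*} [Lattice Q]

/-- `c ⊔ ⨆ x ∈ s, x`, written as a fold since `Q` need not have a bottom element. -/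
def Finset.supWith (s : Finset Q) (c : Q) : Q :=
  s.fold (· ⊔ ·) c id

theorem Finset.supWith_le_iff {s : Finset Q} {c v : Q} :
    s.supWith c ≤ v ↔ c ≤ v ∧ ∀ x ∈ s, x ≤ v :=
  fold_op_rel_iff_and (r := fun a b => b ≤ a) sup_le_iff

theorem nat_card_le_ncard_covBy_of_pairwise_sup_eq (hfin : ∀ x : Q, (Iic x).Finite) {ι : Type*}
    {z : Q} {u : ι → Q} (hu : ∀ i, u i < z) (hsup : Pairwise fun i j => u i ⊔ u j = z) :
    Nat.card ι ≤ {y | y ⋖ z}.ncard := by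
  let := LocallyFiniteOrder.ofFiniteIcc fun a b : Q => (hfin b).subset Icc_subset_Iic_self
  choose w huw hwz using fun i => exists_le_covBy_of_lt (hu i)
  have hw : Function.Injective w := by
    intro i j hij
    by_contra hne
    exact (hwz i).lt.not_ge (hsup hne ▸ sup_le (huw i) (hij ▸ huw j))
  have : Finite {y | y ⋖ z} := ((hfin z).subset fun y hy => hy.lt.le).to_subtype
  rw [← Nat.card_coe_set_eq]
  exact Nat.card_le_card_of_injective (fun i => ⟨w i, hwz i⟩) fun i j h =>
    hw (congrArg Subtype.val h)

theorem Order.Ideal.card_lt_ncard_covBy_of_isFree [DecidableEq Q]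
    (hfin : ∀ x : Q, (Iic x).Finite) {I : Order.Ideal Q} {c : Q} (hc : c ∉ I) {s : Finset Q}
    (hs : s.Nonempty) (hsI : ↑s ⊆ (I : Set Q))
    (hfree : IsFree (fun t => Iic (t.supWith c)) s) :
    s.card < {y | y ⋖ s.supWith c}.ncard := by
  set z := s.supWith c
  set zErase : Q → Q := fun a => (s.erase a).supWith c
  have hcz : c ≤ z := (supWith_le_iff.1 le_rfl).1
  have hsz : ∀ x ∈ s, x ≤ z := (supWith_le_iff.1 le_rfl).2
  have hzErase : ∀ a, c ≤ zErase a ∧ ∀ x ∈ s.erase a, x ≤ zErase a := fun a =>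
    supWith_le_iff.1 le_rfl
  have hzErase_le : ∀ a, zErase a ≤ z := fun a =>
    supWith_le_iff.2 ⟨hcz, fun x hx => hsz x (mem_of_mem_erase hx)⟩
  have hzErase_lt : ∀ a ∈ s, zErase a < z := fun a ha =>
    (hzErase_le a).lt_of_not_ge fun h => hfree a ha (h.trans' (hsz a ha))
  set X := s.sup' hs id
  have hXI : X ∈ I := sup'_mem (I : Set Q) (fun x hx y hy => I.sup_mem hx hy) s hs id hsI
  have hXz : X < z := (sup'_le hs id hsz).lt_of_ne fun h => hc (I.lower (hcz.trans h.ge) hXI)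
  let u : Option s → Q := fun o => o.elim X fun a => zErase a
  have hu : ∀ o, u o < z := by
    rintro (_ | ⟨a, ha⟩)
    exacts [hXz, hzErase_lt a ha]
  have hX_sup : ∀ a, X ⊔ zErase a = z := fun a =>
    (sup_le (sup'_le hs id hsz) (hzErase_le a)).antisymm <| supWith_le_iff.2
      ⟨(hzErase a).1.trans le_sup_right, fun x hx => (le_sup' id hx).trans le_sup_left⟩
  have hzErase_sup : ∀ a b, a ≠ b → zErase a ⊔ zErase b = z := fun a b hab =>
    (sup_le (hzErase_le a) (hzErase_le b)).antisymm <| supWith_le_iff.2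
      ⟨(hzErase a).1.trans le_sup_left, fun x hx => by
        rcases eq_or_ne x a with rfl | hxa
        · exact ((hzErase b).2 x (mem_erase.2 ⟨hab, hx⟩)).trans le_sup_right
        · exact ((hzErase a).2 x (mem_erase.2 ⟨hxa, hx⟩)).trans le_sup_left⟩
  have := nat_card_le_ncard_covBy_of_pairwise_sup_eq hfin hu (by
    rintro (_ | ⟨a, ha⟩) (_ | ⟨b, hb⟩) hne
    · exact absurd rfl hne
    · exact hX_sup b
    · exact (sup_comm _ _).trans (hX_sup a)
    · exact hzErase_sup a b fun h => hne (by subst h; rfl))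
  simpa using this

end Lattice

theorem Order.Ideal.IsProper.mk_lt_aleph {Q : Type u} [Lattice Q] {m : ℕ}
    (hfin : ∀ x : Q, (Iic x).Finite) (hcov : ∀ x : Q, {y | y ⋖ x}.ncard ≤ m + 1)
    {I : Order.Ideal Q} (hI : I.IsProper) : #I < ℵ_ m := by
  classical
  by_contra! hIm
  obtain ⟨c, hc⟩ := (ne_univ_iff_exists_notMem _).1 hI.ne_univ
  obtain ⟨s, hsI, hcard, hfree⟩ :=
    exists_isFree_of_aleph_le (F := fun t => Iic (t.supWith c)) (fun t => hfin _) m hIm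
  have hlt := I.card_lt_ncard_covBy_of_isFree hfin hc (card_pos.1 (by omega)) hsI hfree
  have hle := hcov (s.supWith c)
  omega

theorem ladder_aleph_maximal_general {P : Type u} [Lattice P] (n : ℕ)
    (h : IsNLadder P n)
    (hcard : Cardinal.mk P = Cardinal.aleph ((n - 1 : ℕ) : Ordinal)) :
    IsMaximalNLadder P n := by
  refine ⟨h, ?_⟩
  rintro ⟨Q, _, I, ⟨-, hfin, hcov⟩, hI, ⟨e⟩⟩
  have hI_lt := hI.mk_lt_aleph (m := n - 1) hfin fun x => (hcov x).trans (by omega)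
  rw [← mk_congr e.toEquiv, hcard] at hI_lt
  exact hI_lt.false

/-- Ditor: every `n`-ladder of cardinality `ℵ_{n-1}` is maximal. -/
theorem ladder_aleph_maximal {P : Type u} [Lattice P] (n : ℕ) (hn : 0 < n)
    (h : IsNLadder P n)
    (hcard : Cardinal.mk P = Cardinal.aleph ((n - 1 : ℕ) : Ordinal)) :
    IsMaximalNLadder P n :=
  ladder_aleph_maximal_general n h hcard
end

section
/- For every integer n > 1, an n-ladder L is maximal if and only if L has no cofinal meet-subsemilattice C such that C, with the induced order, is an (n-1)-ladder (equivalently, such that every element of C has at most n-1 lower covers within C). -/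
/-!
If `L` is a proper ideal of an `n`-ladder `Q`, fix `q ∉ L` and send each `d ≥ q` to the largest
element `m d` of `L` below `d`. The image `C` of `m` is a cofinal meet-subsemilattice of `L`, and
every lower cover of `x` within `C` is `m w` for a lower cover `w` of `x ⊔ q` with `x ≰ w`;
since some lower cover of `x ⊔ q` lies above `x`, at most `n - 1` are left.

Conversely, given such a `C`, put a copy `c'` of each `c ∈ C` on top of `L`, with `x ≤ c'` iff
`x ≤ c`. Joins exist because every element of `L` has a least upper bound in `C`, the lower covers
of `c'` are `c` and the copies of the lower covers of `c` within `C`, and `L` is a proper ideal of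
the new `n`-ladder.
-/

open Set

universe u

variable {α β : Type*}

def lowerCoversWithin [Preorder α] (C : Set α) (x : α) : Set α :=
  {z | z ∈ C ∧ z < x ∧ ∀ y ∈ C, ¬ (z < y ∧ y < x)}

def IsCofinalSubladder [Lattice α] (C : Set α) (k : ℕ) : Prop :=
  C.Nonempty ∧ InfClosed C ∧ IsCofinal C ∧ ∀ x ∈ C, (lowerCoversWithin C x).ncard ≤ k

lemma exists_le_covBy_of_lt_of_finite_Iic [PartialOrder α] {a b : α} (hab : a < b)
    (hb : (Iic b).Finite) : ∃ w, a ≤ w ∧ w ⋖ b := by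
  have : Finite (Iic b) := hb.to_subtype
  obtain ⟨w, haw, hwb⟩ :=
    exists_le_covBy_of_lt (show (⟨a, hab.le⟩ : Iic b) < ⟨b, le_rfl⟩ from hab)
  exact ⟨w, haw, (Set.OrdConnected.apply_covBy_apply_iff (OrderEmbedding.subtype _)
    (by rw [OrderEmbedding.coe_subtype, Subtype.range_coe]; exact ordConnected_Iic)).2 hwb⟩

lemma SupClosed.exists_isGreatest_of_finite [SemilatticeSup α] {s : Set α} (hs : SupClosed s)
    (hfin : s.Finite) (hne : s.Nonempty) : ∃ m, IsGreatest s m :=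
  ⟨hfin.toFinset.sup' (by simpa) id,
    by simpa using hs.finsetSup'_mem (by simpa) fun _ h => by simpa using h,
    fun _ hy => Finset.le_sup' id (hfin.mem_toFinset.2 hy)⟩

lemma InfClosed.exists_isLeast_of_finite [SemilatticeInf α] {s : Set α} (hs : InfClosed s)
    (hfin : s.Finite) (hne : s.Nonempty) : ∃ m, IsLeast s m :=
  ⟨hfin.toFinset.inf' (by simpa) id,
    by simpa using hs.finsetInf'_mem (by simpa) fun _ h => by simpa using h,
    fun _ hy => Finset.inf'_le id (hfin.mem_toFinset.2 hy)⟩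

lemma InfClosed.exists_isLeast_inter_Ici [SemilatticeInf α] {s : Set α} (hs : InfClosed s)
    (hcof : IsCofinal s) (hfin : ∀ x : α, (Iic x).Finite) (p : α) :
    ∃ m, IsLeast (s ∩ Ici p) m := by
  obtain ⟨c, hc, hpc⟩ := hcof p
  have hinf : InfClosed (s ∩ Ici p ∩ Iic c) :=
    (hs.inter fun _ hx _ hy => le_inf hx hy).inter (isLowerSet_Iic c).infClosed
  obtain ⟨m, ⟨⟨hms, hpm⟩, hmc⟩, hleast⟩ :=
    hinf.exists_isLeast_of_finite ((hfin c).subset inter_subset_right)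
      ⟨c, ⟨hc, hpc⟩, le_rfl⟩
  refine ⟨m, ⟨hms, hpm⟩, fun y ⟨hys, hpy⟩ => ?_⟩
  exact (hleast ⟨⟨hs hms hys, le_inf hpm hpy⟩, inf_le_left.trans hmc⟩).trans inf_le_right

lemma exists_closureOperator_isClosed_iff [Lattice α] {C : Set α} (hinf : InfClosed C)
    (hcof : IsCofinal C) (hfin : ∀ x : α, (Iic x).Finite) :
    ∃ c : ClosureOperator α, ∀ x, c.IsClosed x ↔ x ∈ C := by
  choose σ hσ using hinf.exists_isLeast_inter_Ici hcof hfin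
  exact ⟨.ofPred σ (· ∈ C) (fun p => (hσ p).1.2) (fun p => (hσ p).1.1)
    (fun x _ hxy hy => (hσ x).2 ⟨hy, hxy⟩), fun _ => Iff.rfl⟩

namespace Order.Ideal

variable [Lattice α] {I : Order.Ideal α}

def IsTrace (I : Order.Ideal α) (m : α → α) : Prop :=
  ∀ d, IsGreatest (↑I ∩ Iic d) (m d)

lemma exists_isGreatest_inter_Iic (I : Order.Ideal α) {d : α} (hd : (Iic d).Finite) :
    ∃ x, IsGreatest (↑I ∩ Iic d) x := by
  obtain ⟨s, hs⟩ := I.nonempty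
  refine SupClosed.exists_isGreatest_of_finite ?_ (hd.subset inter_subset_right)
    ⟨s ⊓ d, I.lower inf_le_left hs, inf_le_right⟩
  exact SupClosed.inter (fun _ ha _ hb => I.sup_mem ha hb) fun _ ha _ hb => sup_le ha hb

lemma exists_isTrace (I : Order.Ideal α) (hfin : ∀ d : α, (Iic d).Finite) :
    ∃ m, I.IsTrace m :=
  ⟨_, fun d => (I.exists_isGreatest_inter_Iic (hfin d)).choose_spec⟩

namespace IsTrace

variable {m : α → α} (hm : I.IsTrace m)
include hm

lemma apply_mem (d : α) : m d ∈ I := (hm d).1.1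

lemma apply_le (d : α) : m d ≤ d := (hm d).1.2

lemma le_apply {x d : α} (hx : x ∈ I) (hxd : x ≤ d) : x ≤ m d := (hm d).2 ⟨hx, hxd⟩

lemma monotone : Monotone m :=
  fun _ _ h => hm.le_apply (hm.apply_mem _) ((hm.apply_le _).trans h)

lemma map_inf (d e : α) : m (d ⊓ e) = m d ⊓ m e :=
  le_antisymm (le_inf (hm.monotone inf_le_left) (hm.monotone inf_le_right))
    (hm.le_apply (I.lower inf_le_left (hm.apply_mem d))
      (inf_le_inf (hm.apply_le d) (hm.apply_le e)))

lemma apply_sup_apply {d q : α} (hqd : q ≤ d) : m (m d ⊔ q) = m d :=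
  le_antisymm (hm.monotone (sup_le (hm.apply_le d) hqd))
    (hm.le_apply (hm.apply_mem d) le_sup_left)

lemma image_Ici_subset (q : α) : m '' Ici q ⊆ I := by
  rintro _ ⟨d, -, rfl⟩
  exact hm.apply_mem d

lemma infClosed_image_Ici (q : α) : InfClosed (m '' Ici q) := by
  rintro _ ⟨d, hd, rfl⟩ _ ⟨e, he, rfl⟩
  exact ⟨d ⊓ e, le_inf hd he, hm.map_inf d e⟩

lemma isCofinalFor_image_Ici (q : α) : IsCofinalFor I (m '' Ici q) :=
  fun s hs => ⟨m (s ⊔ q), ⟨s ⊔ q, le_sup_right, rfl⟩, hm.le_apply hs le_sup_left⟩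

lemma lowerCoversWithin_image_Ici_subset {q x : α} (hx : x ∈ m '' Ici q)
    (hfin : (Iic (x ⊔ q)).Finite) :
    lowerCoversWithin (m '' Ici q) x ⊆ m '' {w | w ⋖ x ⊔ q ∧ ¬ x ≤ w} := by
  obtain ⟨d, hd, rfl⟩ := hx
  rintro z ⟨⟨e, he, rfl⟩, hzx, hz_cov⟩
  have hlt : m e ⊔ q < m d ⊔ q := by
    refine lt_of_le_of_ne (sup_le_sup_right hzx.le q) fun h => hzx.ne ?_
    rw [← hm.apply_sup_apply he, h, hm.apply_sup_apply hd]
  obtain ⟨w, hzw, hw⟩ := exists_le_covBy_of_lt_of_finite_Iic hlt hfin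
  have hxw : ¬ m d ≤ w := fun h => hw.lt.not_ge (sup_le h (le_sup_right.trans hzw))
  refine ⟨w, ⟨hw, hxw⟩, ?_⟩
  have hzw' : m e ≤ m w := hm.apply_sup_apply he ▸ hm.monotone hzw
  have hwx : m w < m d := by
    refine lt_of_le_of_ne ?_ fun h => hxw (h ▸ hm.apply_le w)
    exact hm.apply_sup_apply hd ▸ hm.monotone hw.le
  by_contra hne
  exact hz_cov (m w) ⟨w, le_sup_right.trans hzw, rfl⟩
    ⟨lt_of_le_of_ne hzw' (Ne.symm hne), hwx⟩

lemma ncard_lowerCoversWithin_image_Ici_le {q x : α} {n : ℕ} (hq : q ∉ I)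
    (hfin : ∀ d : α, (Iic d).Finite) (hcov : ∀ d : α, {w | w ⋖ d}.ncard ≤ n)
    (hx : x ∈ m '' Ici q) : (lowerCoversWithin (m '' Ici q) x).ncard ≤ n - 1 := by
  have hxq : x < x ⊔ q := lt_of_le_of_ne le_sup_left fun h =>
    hq (I.lower (h ▸ le_sup_right) (hm.image_Ici_subset q hx))
  obtain ⟨w₀, hxw₀, hw₀⟩ := exists_le_covBy_of_lt_of_finite_Iic hxq (hfin _)
  have hcov_fin : {w | w ⋖ x ⊔ q}.Finite := (hfin _).subset fun _ hw => hw.le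
  have hrest_fin : {w | w ⋖ x ⊔ q ∧ ¬ x ≤ w}.Finite := hcov_fin.subset fun _ hw => hw.1
  calc (lowerCoversWithin (m '' Ici q) x).ncard
      ≤ (m '' {w | w ⋖ x ⊔ q ∧ ¬ x ≤ w}).ncard :=
        ncard_le_ncard (hm.lowerCoversWithin_image_Ici_subset hx (hfin _)) (hrest_fin.image m)
    _ ≤ {w | w ⋖ x ⊔ q ∧ ¬ x ≤ w}.ncard := ncard_image_le hrest_fin
    _ ≤ ({w | w ⋖ x ⊔ q} \ {w₀}).ncard :=
        ncard_le_ncard (fun _ hw => ⟨hw.1, fun h => hw.2 (h ▸ hxw₀)⟩) hcov_fin.sdiff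
    _ = {w | w ⋖ x ⊔ q}.ncard - 1 := ncard_sdiff_singleton_of_mem hw₀
    _ ≤ n - 1 := Nat.sub_le_sub_right (hcov _) 1

end IsTrace

theorem IsProper.exists_infClosed_isCofinalFor (hI : I.IsProper) {n : ℕ}
    (hfin : ∀ d : α, (Iic d).Finite) (hcov : ∀ d : α, {w | w ⋖ d}.ncard ≤ n) :
    ∃ D ⊆ (I : Set α), D.Nonempty ∧ InfClosed D ∧ IsCofinalFor I D ∧
      ∀ x ∈ D, (lowerCoversWithin D x).ncard ≤ n - 1 := by
  obtain ⟨m, hm⟩ := I.exists_isTrace hfin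
  obtain ⟨q, hq⟩ := (ne_univ_iff_exists_notMem _).1 hI.ne_univ
  exact ⟨m '' Ici q, hm.image_Ici_subset q, ⟨m q, q, le_rfl, rfl⟩, hm.infClosed_image_Ici q,
    hm.isCofinalFor_image_Ici q,
    fun _ hx => hm.ncard_lowerCoversWithin_image_Ici_le hq hfin hcov hx⟩

end Order.Ideal

lemma OrderEmbedding.map_inf_of_isLowerSet_range [Lattice α] [Lattice β] (F : α ↪o β)
    (hF : IsLowerSet (range F)) (x y : α) : F (x ⊓ y) = F x ⊓ F y := by
  obtain ⟨z, hz⟩ := hF inf_le_left (mem_range_self x)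
  refine le_antisymm (le_inf (F.monotone inf_le_left) (F.monotone inf_le_right)) ?_
  rw [← hz]
  exact F.monotone
    (le_inf (F.le_iff_le.1 (hz ▸ inf_le_left)) (F.le_iff_le.1 (hz ▸ inf_le_right)))

lemma lowerCoversWithin_preimage [PartialOrder α] [PartialOrder β] (F : α ↪o β) {D : Set β}
    (hD : D ⊆ range F) (x : α) :
    lowerCoversWithin (F ⁻¹' D) x = F ⁻¹' lowerCoversWithin D (F x) := by
  ext z
  simp only [lowerCoversWithin, mem_preimage, mem_ofPred_eq, F.lt_iff_lt]
  refine and_congr_right fun _ => and_congr_right fun _ => ⟨fun h y hy => ?_, fun h y hy => ?_⟩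
  · obtain ⟨y, rfl⟩ := hD hy
    simpa only [F.lt_iff_lt] using h y hy
  · simpa only [F.lt_iff_lt] using h (F y) hy

lemma isCofinalSubladder_preimage [Lattice α] [Lattice β] (F : α ↪o β)
    (hF : IsLowerSet (range F)) {D : Set β} {k : ℕ} (hD : D ⊆ range F) (hne : D.Nonempty)
    (hinf : InfClosed D)
    (hcof : IsCofinalFor (range F) D) (hcov : ∀ x ∈ D, (lowerCoversWithin D x).ncard ≤ k) :
    IsCofinalSubladder (F ⁻¹' D) k := by
  refine ⟨?_, ?_, ?_, ?_⟩
  · obtain ⟨_, hy⟩ := hne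
    obtain ⟨x, rfl⟩ := hD hy
    exact ⟨x, hy⟩
  · intro x hx y hy
    simpa only [mem_preimage, F.map_inf_of_isLowerSet_range hF] using hinf hx hy
  · intro p
    obtain ⟨_, hc, hpc⟩ := hcof (mem_range_self p)
    obtain ⟨c, rfl⟩ := hD hc
    exact ⟨c, hc, F.le_iff_le.1 hpc⟩
  · intro x hx
    rw [lowerCoversWithin_preimage F hD,
      ncard_preimage_of_injective_subset_range F.injective (fun _ hz => hD hz.1)]
    exact hcov _ hx

namespace ClosureOperator

section PartialOrder

variable [PartialOrder α] (c : ClosureOperator α)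

/-- On `α × Bool`, `(x, false)` stands for `x` and `(x, true)` for a copy of `x` above it;
the closed elements are `α` itself together with the copies of the closed elements of `c`. -/
def prodBool : ClosureOperator (α × Bool) :=
  .ofPred (fun p => (cond p.2 (c p.1) p.1, p.2)) (fun p => p.2 → c.IsClosed p.1)
    (by rintro ⟨x, _ | _⟩ <;> simp [c.le_closure])
    (by rintro ⟨x, _ | _⟩ <;> simp)
    (by
      rintro ⟨x, _ | _⟩ ⟨y, b⟩ ⟨hxy, hb⟩ hy
      · exact ⟨hxy, hb⟩
      · obtain rfl : b = true := top_le_iff.1 hb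
        exact ⟨c.closure_min hxy (hy rfl), le_rfl⟩)

@[simp]
lemma isClosed_prodBool_iff {p : α × Bool} : c.prodBool.IsClosed p ↔ (p.2 → c.IsClosed p.1) :=
  Iff.rfl

lemma finite_Iic_prodBool_closeds (hfin : ∀ x : α, (Iic x).Finite) (z : c.prodBool.Closeds) :
    (Iic z).Finite := by
  have : (Iic z.1).Finite := ((hfin z.1.1).prod finite_univ).subset fun _ hp => ⟨hp.1, trivial⟩
  exact (this.preimage Subtype.val_injective.injOn).subset fun _ hw => hw

lemma injOn_fst_covBy_prodBool (z : c.prodBool.Closeds) :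
    InjOn (fun w => w.1.1) {w | w ⋖ z} := by
  intro w₁ hw₁ w₂ hw₂ h
  wlog hb : w₁.1.2 ≤ w₂.1.2 generalizing w₁ w₂
  · exact (this hw₂ hw₁ h.symm ((le_total _ _).resolve_left hb)).symm
  -- points with equal first coordinates are comparable, and comparable lower covers coincide
  rcases (show w₁ ≤ w₂ from ⟨h.le, hb⟩).lt_or_eq with hlt | heq
  · exact absurd hw₂.lt (hw₁.2 hlt)
  · exact heq

lemma covBy_of_covBy_prodBool_false {x : α} {hx : c.prodBool.IsClosed (x, false)}
    {w : c.prodBool.Closeds} (hw : w ⋖ ⟨(x, false), hx⟩) : w.1.1 ⋖ x := by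
  obtain ⟨⟨y, b⟩, hyb⟩ := w
  obtain rfl : b = false := le_bot_iff.1 hw.le.2
  refine ⟨Prod.mk_lt_mk_iff_left.1 hw.lt,
    fun v hyv hvx => hw.2 (c := ⟨(v, false), by simp⟩) ?_ ?_⟩
  · exact Subtype.mk_lt_mk.2 (Prod.mk_lt_mk_iff_left.2 hyv)
  · exact Subtype.mk_lt_mk.2 (Prod.mk_lt_mk_iff_left.2 hvx)

lemma mem_insert_lowerCoversWithin_of_covBy_prodBool_true {x : α}
    {hx : c.prodBool.IsClosed (x, true)} {w : c.prodBool.Closeds} (hw : w ⋖ ⟨(x, true), hx⟩) :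
    w.1.1 ∈ insert x (lowerCoversWithin {y | c.IsClosed y} x) := by
  obtain ⟨⟨y, b⟩, hyb⟩ := w
  rcases eq_or_ne y x with rfl | hne
  · exact mem_insert _ _
  have hyx : y < x := lt_of_le_of_ne hw.le.1 hne
  cases b with
  | false =>
    exact (hw.2 (c := ⟨(x, false), by simp⟩)
      (Subtype.mk_lt_mk.2 (Prod.mk_lt_mk_iff_left.2 hyx))
      (Subtype.mk_lt_mk.2 (Prod.mk_lt_mk_iff_right.2 Bool.false_lt_true))).elim
  | true =>
    refine mem_insert_of_mem _
      ⟨hyb rfl, hyx, fun v hv hyvx => hw.2 (c := ⟨(v, true), fun _ => hv⟩) ?_ ?_⟩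
    · exact Subtype.mk_lt_mk.2 (Prod.mk_lt_mk_iff_left.2 hyvx.1)
    · exact Subtype.mk_lt_mk.2 (Prod.mk_lt_mk_iff_left.2 hyvx.2)

end PartialOrder

variable [Lattice α] (c : ClosureOperator α)

noncomputable instance : Lattice c.prodBool.Closeds := c.prodBool.gi.liftLattice

def prodBoolBaseIdeal [Nonempty α] : Order.Ideal c.prodBool.Closeds where
  carrier := {z | z.1.2 = false}
  lower' _ _ hwz hz := le_bot_iff.1 (hwz.2.trans (le_of_eq hz))
  nonempty' := ⟨⟨(Classical.arbitrary α, false), by simp⟩, rfl⟩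
  directed' a ha b hb := ⟨⟨(a.1.1 ⊔ b.1.1, false), by simp⟩, rfl,
    ⟨le_sup_left, (ha : a.1.2 = false).le⟩, ⟨le_sup_right, (hb : b.1.2 = false).le⟩⟩

lemma prodBoolBaseIdeal_isProper [Nonempty α] : c.prodBoolBaseIdeal.IsProper := by
  refine ⟨fun h => ?_⟩
  have : (⟨(c (Classical.arbitrary α), true), fun _ => c.isClosed_closure _⟩ :
      c.prodBool.Closeds) ∈ (c.prodBoolBaseIdeal : Set c.prodBool.Closeds) := h ▸ mem_univ _
  cases this

def prodBoolBaseIso [Nonempty α] : α ≃o c.prodBoolBaseIdeal where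
  toFun x := ⟨⟨(x, false), by simp⟩, rfl⟩
  invFun z := z.1.1.1
  left_inv _ := rfl
  right_inv z := Subtype.ext (Subtype.ext (Prod.ext rfl z.2.symm))
  map_rel_iff' := by simp [← Subtype.coe_le_coe]

theorem isNLadder_prodBool_closeds {n : ℕ} (hα : IsNLadder α n) (hn : 1 ≤ n)
    (hc : ∀ x, c.IsClosed x → (lowerCoversWithin {y | c.IsClosed y} x).ncard ≤ n - 1) :
    IsNLadder c.prodBool.Closeds n := by
  obtain ⟨⟨x₀⟩, hfin, hcov⟩ := hα
  refine ⟨⟨⟨(x₀, false), by simp⟩⟩, c.finite_Iic_prodBool_closeds hfin, ?_⟩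
  rintro ⟨⟨x, _ | _⟩, hx⟩
  · calc _ ≤ {y | y ⋖ x}.ncard :=
          ncard_le_ncard_of_injOn _ (fun _ hw => c.covBy_of_covBy_prodBool_false hw)
            (c.injOn_fst_covBy_prodBool _) ((hfin x).subset fun _ h => h.le)
      _ ≤ n := hcov x
  · calc _ ≤ (insert x (lowerCoversWithin {y | c.IsClosed y} x)).ncard :=
          ncard_le_ncard_of_injOn _
            (fun _ hw => c.mem_insert_lowerCoversWithin_of_covBy_prodBool_true hw)
            (c.injOn_fst_covBy_prodBool _) (((hfin x).subset fun _ h => h.2.1.le).insert x)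
      _ ≤ (lowerCoversWithin {y | c.IsClosed y} x).ncard + 1 := ncard_insert_le _ _
      _ ≤ n := by have := hc x (hx rfl); omega

end ClosureOperator

theorem exists_orderIso_ideal_of_isCofinalSubladder {L : Type u} [Lattice L] {n : ℕ}
    (hL : IsNLadder L n) (hn : 1 ≤ n) {C : Set L} (hC : IsCofinalSubladder C (n - 1)) :
    ∃ (Q : Type u) (_ : Lattice Q) (I : Order.Ideal Q),
      IsNLadder Q n ∧ I.IsProper ∧ Nonempty (L ≃o ↥I) := by
  obtain ⟨-, hinf, hcof, hcov⟩ := hC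
  have := hL.1
  obtain ⟨c, hc⟩ := exists_closureOperator_isClosed_iff hinf hcof hL.2.1
  have hcC : {x | c.IsClosed x} = C := ext hc
  refine ⟨c.prodBool.Closeds, inferInstance, c.prodBoolBaseIdeal,
    c.isNLadder_prodBool_closeds hL hn fun x hx => ?_, c.prodBoolBaseIdeal_isProper,
    ⟨c.prodBoolBaseIso⟩⟩
  rw [hcC]
  exact hcov x ((hc x).1 hx)

theorem Order.Ideal.IsProper.exists_isCofinalSubladder {L Q : Type*} [Lattice L] [Lattice Q]
    {n : ℕ} (hQ : IsNLadder Q n) {I : Order.Ideal Q} (hI : I.IsProper) (e : L ≃o I) :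
    ∃ C : Set L, IsCofinalSubladder C (n - 1) := by
  obtain ⟨D, hDI, hne, hinf, hcof, hcov⟩ := hI.exists_infClosed_isCofinalFor hQ.2.1 hQ.2.2
  let F : L ↪o Q := e.toOrderEmbedding.trans (OrderEmbedding.subtype _)
  have hF : range F = I := by simp [F]
  exact ⟨F ⁻¹' D,
    isCofinalSubladder_preimage F (hF ▸ I.lower) (hF ▸ hDI) hne hinf (hF ▸ hcof) hcov⟩

/-- for `n > 1`, an `n`-ladder `L` is maximal iff it has no
cofinal meet-subsemilattice `C` all of whose elements have at most `n - 1`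
lower covers within `C` (i.e. `C` with the induced order is an `(n-1)`-ladder). -/
theorem maximal_iff_no_cofinal_meet_subsemilattice {L : Type u} [Lattice L]
    (n : ℕ) (hn : 1 < n) (hL : IsNLadder L n) :
    IsMaximalNLadder L n ↔
      ¬ ∃ C : Set L, C.Nonempty ∧
        (∀ x ∈ C, ∀ y ∈ C, x ⊓ y ∈ C) ∧
        (∀ p : L, ∃ c ∈ C, p ≤ c) ∧
        (∀ x ∈ C, {z | z ∈ C ∧ z < x ∧ ∀ y ∈ C, ¬ (z < y ∧ y < x)}.ncard ≤ n - 1) := by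
  constructor
  · rintro ⟨-, hmax⟩ ⟨C, hC⟩
    exact hmax (exists_orderIso_ideal_of_isCofinalSubladder hL hn.le hC)
  · intro hno
    refine ⟨hL, ?_⟩
    rintro ⟨Q, _, I, hQ, hI, ⟨e⟩⟩
    exact hno (hI.exists_isCofinalSubladder hQ e)
end
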